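/- arXiv:math/0401155 — 3 statements merged into one kernel-verified Lean document; each statement's English description precedes it below -/
import Mathlib

section
/- add(M) = min{b, cov(M)}: the additivity of the meager ideal on ℝ equals the minimum of the bounding number b and the covering number cov(M) of the meager ideal. -/
open Filter Set Cardinal

/-- The Rothberger property `S1(O,O)`: for every sequence of open covers one can select one
member from each so that the selections form a cover. -/
def RothbergerProp (X : Type*) [TopologicalSpace X] : Prop :=
  ∀ U : ℕ → Set (Set X),
    (∀ n, (∀ s ∈ U n, IsOpen s) ∧ ⋃₀ U n = Set.univ) →
    ∃ f : ℕ → Set X, (∀ n, f n ∈ U n) ∧ (⋃ n, f n) = Set.univ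

/-- The Hurewicz property `Ufin(O,Γ)`: for every sequence of open covers one can select finite
subfamilies whose unions form a γ-cover (every point is in all but finitely many of them). -/
def HurewiczProp (X : Type*) [TopologicalSpace X] : Prop :=
  ∀ U : ℕ → Set (Set X),
    (∀ n, (∀ s ∈ U n, IsOpen s) ∧ ⋃₀ U n = Set.univ) →
    ∃ F : ℕ → Set (Set X), (∀ n, F n ⊆ U n ∧ (F n).Finite) ∧
      ∀ x : X, ∀ᶠ n in atTop, x ∈ ⋃₀ F n

/-- The Menger property `Ufin(O,O)`. -/
def MengerProp (X : Type*) [TopologicalSpace X] : Prop :=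
  ∀ U : ℕ → Set (Set X),
    (∀ n, (∀ s ∈ U n, IsOpen s) ∧ ⋃₀ U n = Set.univ) →
    ∃ F : ℕ → Set (Set X), (∀ n, F n ⊆ U n ∧ (F n).Finite) ∧
      (⋃ n, ⋃₀ F n) = Set.univ

/-- The Gerlits–Nagy property `(*)_GN` = Rothberger + Hurewicz
(Kočinac–Scheepers characterization). -/
def GerlitsNagy (X : Type*) [TopologicalSpace X] : Prop :=
  RothbergerProp X ∧ HurewiczProp X

/-- Strong measure zero: for every sequence of positive reals `ε n` there is a cover
`A n` with `diam (A n) < ε n`. -/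
def StrongMeasureZero (X : Type*) [PseudoMetricSpace X] : Prop :=
  ∀ ε : ℕ → ℝ, (∀ n, 0 < ε n) →
    ∃ A : ℕ → Set X, (⋃ n, A n) = Set.univ ∧ ∀ n, EMetric.diam (A n) < ENNReal.ofReal (ε n)

/-- The bounding number `b`: least cardinality of an unbounded family in `(ℕ → ℕ, ≤*)`. -/
noncomputable def boundingNumber : Cardinal :=
  sInf { c : Cardinal | ∃ F : Set (ℕ → ℕ), #F = c ∧
    ∀ g : ℕ → ℕ, ∃ f ∈ F, ¬ ∀ᶠ n in atTop, f n ≤ g n }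

/-- `cov(M)`: least cardinality of a family of meager sets of reals covering `ℝ`. -/
noncomputable def covMeager : Cardinal :=
  sInf { c : Cardinal | ∃ S : Set (Set ℝ), #S = c ∧ (∀ A ∈ S, IsMeagre A) ∧ ⋃₀ S = Set.univ }

/-- `add(M)`: least cardinality of a family of meager sets of reals whose union is not meager. -/
noncomputable def addMeager : Cardinal :=
  sInf { c : Cardinal | ∃ S : Set (Set ℝ), #S = c ∧ (∀ A ∈ S, IsMeagre A) ∧ ¬ IsMeagre (⋃₀ S) }

/-- An ω-cover: `Set.univ ∉ U` and every finite set is contained in some member of `U`. -/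
def IsOmegaCover {X : Type*} (U : Set (Set X)) : Prop :=
  Set.univ ∉ U ∧ ∀ F : Set X, F.Finite → ∃ u ∈ U, F ⊆ u

/-- A γ-cover: an infinite family such that every point belongs to all but finitely many members. -/
def IsGammaCover {X : Type*} (U : Set (Set X)) : Prop :=
  U.Infinite ∧ ∀ x : X, {u ∈ U | x ∉ u}.Finite

/-- A family `U` is groupable (`U ∈ Ω^gp`) if it admits a partition into finite sets such that
every finite `F ⊆ X` is contained in a member of all but finitely many pieces. -/
def IsGroupable {X : Type*} (U : Set (Set X)) : Prop :=
  ∃ P : Set (Set (Set X)),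
    (∀ G ∈ P, G.Finite ∧ G.Nonempty) ∧ P.PairwiseDisjoint id ∧ ⋃₀ P = U ∧
    ∀ F : Set X, F.Finite → {G ∈ P | ¬ ∃ u ∈ G, F ⊆ u}.Finite

/-- The selection property `S1(Ω, Ω^gp)`. -/
def S1OmegaOmegaGp (X : Type*) [TopologicalSpace X] : Prop :=
  ∀ U : ℕ → Set (Set X),
    (∀ n, (∀ s ∈ U n, IsOpen s) ∧ IsOmegaCover (U n)) →
    ∃ f : ℕ → Set X, (∀ n, f n ∈ U n) ∧
      IsOmegaCover (Set.range f) ∧ IsGroupable (Set.range f)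

/-- A γ-set: every open ω-cover contains a γ-subcover. -/
def IsGammaSet (X : Type*) [TopologicalSpace X] : Prop :=
  ∀ U : Set (Set X), (∀ s ∈ U, IsOpen s) → IsOmegaCover U →
    ∃ V ⊆ U, IsGammaCover V

/-!
Everything is transferred to Cantor space `ℕ → Fin 2` along the binary expansions
`x ↦ ofDigits x + z`, `z : ℤ`. These preserve meagreness in both directions, because a cylinder
is mapped onto an interval whose interior has its whole preimage inside the cylinder.

In Cantor space every meagre set lies in a set `nonMatching m y` of sequences that, from some
block on, disagree with `y` on every block of the interval partition `m`. For `add(M) ≤ b`, the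
sets `nonMatching (gapPartition (partialSups f)) 0`, for `f` in an unbounded family, have a
non-meagre union: a single `nonMatching m y` containing all of them would force `n ↦ m (n + 2)`
to bound the family.
For `min(b, cov(M)) ≤ add(M)`, take fewer than `b` and `cov(M)` meagre sets, inside
`nonMatching mᵢ yᵢ`. Boundedness gives a partition `m` whose late blocks contain blocks of every
`mᵢ`. Since the sets `nonMatching m yᵢ` do not cover, some `w` matches every `yᵢ` on infinitely
many `m`-blocks. A second partition `m'`, whose late blocks contain such matching blocks, puts
the whole union inside `nonMatching m' w`.
-/

section Meagre

variable {X Y : Type*} [TopologicalSpace X] [TopologicalSpace Y] {f : X → Y}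

theorem tendsto_residual_of_nonempty_interior_image (hf : Continuous f)
    (hU : ∀ U : Set X, IsOpen U → U.Nonempty → (interior (f '' U)).Nonempty) :
    Tendsto f (residual X) (residual Y) := by
  refine le_countableGenerate_iff_of_countableInterFilter.mpr ?_
  rintro t ⟨ht, htd⟩
  refine residual_of_dense_open (ht.preimage hf) (dense_iff_inter_open.mpr fun U hUo hUne => ?_)
  obtain ⟨_, hyU, hyt⟩ := htd.inter_open_nonempty _ isOpen_interior (hU U hUo hUne)
  obtain ⟨x, hxU, rfl⟩ := interior_subset hyU
  exact ⟨x, hxU, hyt⟩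

theorem IsMeagre.preimage_of_nonempty_interior_image (hf : Continuous f)
    (hU : ∀ U : Set X, IsOpen U → U.Nonempty → (interior (f '' U)).Nonempty)
    {s : Set Y} (hs : IsMeagre s) : IsMeagre (f ⁻¹' s) :=
  tendsto_residual_of_nonempty_interior_image hf hU hs

theorem IsNowhereDense.image_of_exists_preimage_subset (hf : Continuous f)
    (hV : ∀ U : Set X, IsOpen U → U.Nonempty →
      ∃ V, IsOpen V ∧ (f ⁻¹' V).Nonempty ∧ f ⁻¹' V ⊆ U)
    {s : Set X} (hs : IsNowhereDense s) : IsNowhereDense (f '' s) := by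
  set W := interior (closure (f '' s))
  have hW : IsOpen (f ⁻¹' W) := isOpen_interior.preimage hf
  have meets : ∀ O, IsOpen O → ∀ y ∈ O, y ∈ W → ∃ x ∈ s, f x ∈ O ∩ W :=
    fun O hO y hyO hyW => by
      obtain ⟨_, hmem, x, hxs, rfl⟩ :=
        mem_closure_iff.mp (interior_subset hyW) _ (hO.inter isOpen_interior) ⟨hyO, hyW⟩
      exact ⟨x, hxs, hmem⟩
  rw [IsNowhereDense, ← not_nonempty_iff_eq_empty]
  rintro ⟨y, hy⟩
  obtain ⟨x, -, -, hxW⟩ := meets univ isOpen_univ y trivial hy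
  have hU : (f ⁻¹' W \ closure s).Nonempty := by
    rw [nonempty_iff_ne_empty, Ne, sdiff_eq_empty]
    intro hWs
    have := interior_maximal hWs hW
    rw [hs] at this
    exact this hxW
  obtain ⟨V, hVo, ⟨a, ha⟩, hVU⟩ := hV _ (hW.sdiff isClosed_closure) hU
  obtain ⟨c, hcs, hcV, -⟩ := meets V hVo (f a) ha (hVU ha).1
  exact (hVU hcV).2 (subset_closure hcs)

theorem IsMeagre.image_of_exists_preimage_subset (hf : Continuous f)
    (hV : ∀ U : Set X, IsOpen U → U.Nonempty →
      ∃ V, IsOpen V ∧ (f ⁻¹' V).Nonempty ∧ f ⁻¹' V ⊆ U)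
    {s : Set X} (hs : IsMeagre s) : IsMeagre (f '' s) := by
  obtain ⟨T, hT, hTc, hsT⟩ := isMeagre_iff_countable_union_isNowhereDense.mp hs
  rw [isMeagre_iff_countable_union_isNowhereDense]
  refine ⟨image f '' T, ?_, hTc.image _, ?_⟩
  · rintro _ ⟨t, ht, rfl⟩
    exact (hT t ht).image_of_exists_preimage_subset hf hV
  · rw [← image_sUnion]
    exact image_mono hsT

theorem IsMeagre.exists_isOpen_dense_iInter_subset_compl {A : Set X} (hA : IsMeagre A) :
    ∃ D : ℕ → Set X, (∀ k, IsOpen (D k)) ∧ (∀ k, Dense (D k)) ∧ ⋂ k, D k ⊆ Aᶜ := by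
  obtain ⟨S, hSo, hSd, hSc, hSA⟩ := mem_residual_iff.mp hA
  obtain ⟨D, hD⟩ := (hSc.insert Set.univ).exists_eq_range (Set.insert_nonempty _ _)
  have hDS : ∀ k, D k = Set.univ ∨ D k ∈ S := fun k => by
    rw [← mem_insert_iff, hD]
    exact mem_range_self k
  refine ⟨D, fun k => (hDS k).elim (· ▸ isOpen_univ) (hSo _),
    fun k => (hDS k).elim (· ▸ dense_univ) (hSd _), ?_⟩
  rwa [← sInter_range, ← hD, sInter_insert, univ_inter]

end Meagre

theorem isOpen_setOf_eqOn {ι α : Type*} [TopologicalSpace α] [DiscreteTopology α] (y : ι → α)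
    {s : Set ι} (hs : s.Finite) : IsOpen {x : ι → α | EqOn x y s} := by
  convert isOpen_set_pi hs fun i _ => isOpen_discrete {y i} using 1
  ext x
  simp [EqOn, Set.mem_pi]

theorem PiNat.exists_cylinder_subset {E : ℕ → Type*} [∀ n, TopologicalSpace (E n)]
    [∀ n, DiscreteTopology (E n)] {U : Set (∀ n, E n)} (hU : IsOpen U) {x : ∀ n, E n}
    (hx : x ∈ U) : ∃ n, PiNat.cylinder x n ⊆ U := by
  obtain ⟨_, ⟨y, n, rfl⟩, hxy, hyU⟩ :=
    (PiNat.isTopologicalBasis_cylinders E).exists_subset_of_mem_open hx hU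
  exact ⟨n, (PiNat.mem_cylinder_iff_eq.mp hxy).subset.trans hyU⟩

namespace IntervalPartition

open PiNat

def gapPartition (g : ℕ → ℕ) (j : ℕ) : ℕ := (fun a => a + g a + 1)^[j] 0

theorem gapPartition_succ (g : ℕ → ℕ) (j : ℕ) :
    gapPartition g (j + 1) = gapPartition g j + g (gapPartition g j) + 1 :=
  Function.iterate_succ_apply' _ _ _

theorem strictMono_gapPartition (g : ℕ → ℕ) : StrictMono (gapPartition g) :=
  strictMono_nat_of_lt_succ fun j => by rw [gapPartition_succ]; omega

def EventuallyContainsBlock (m p : ℕ → ℕ) (G : Set ℕ) : Prop :=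
  ∀ᶠ j in atTop, ∃ k ∈ G, m j ≤ p k ∧ p (k + 1) ≤ m (j + 1)

theorem exists_eventuallyContainsBlock {ι : Type*}
    (hb : ∀ e : ι → ℕ → ℕ, ∃ g : ℕ → ℕ, ∀ i, ∀ᶠ n in atTop, e i n ≤ g n)
    {p : ι → ℕ → ℕ} (hp : ∀ i, StrictMono (p i)) {G : ι → Set ℕ}
    (hG : ∀ i, ∃ᶠ k in atTop, k ∈ G i) :
    ∃ m, StrictMono m ∧ ∀ i, EventuallyContainsBlock m (p i) (G i) := by
  choose k hkG hkn using fun i n =>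
    ((hG i).and_eventually ((hp i).tendsto_atTop.eventually_ge_atTop n)).exists
  obtain ⟨g, hg⟩ := hb fun i n => p i (k i n + 1)
  refine ⟨gapPartition g, strictMono_gapPartition g, fun i => ?_⟩
  filter_upwards [(strictMono_gapPartition g).tendsto_atTop.eventually (hg i)] with j hj
  exact ⟨k i _, hkG i _, hkn i _, by rw [gapPartition_succ]; omega⟩

theorem eventually_le_of_eventuallyContainsBlock {m p f : ℕ → ℕ} (hm : StrictMono m)
    (hf : Monotone f) (hp : ∀ k, f (p k) ≤ p (k + 1)) (h : EventuallyContainsBlock m p univ) :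
    ∀ᶠ n in atTop, f n ≤ m (n + 2) := by
  filter_upwards [(tendsto_add_atTop_nat 1).eventually h] with n hn
  obtain ⟨k, -, hk, hk'⟩ := hn
  calc f n ≤ f (p k) := hf ((Nat.le_succ n).trans ((hm.id_le (n + 1)).trans hk))
    _ ≤ p (k + 1) := hp k
    _ ≤ m (n + 2) := hk'

variable {α : Type*}

def Matches (m : ℕ → ℕ) (y x : ℕ → α) : Prop :=
  ∃ᶠ j in atTop, EqOn x y (Ico (m j) (m (j + 1)))

def nonMatching (m : ℕ → ℕ) (y : ℕ → α) : Set (ℕ → α) := {x | ¬ Matches m y x}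

theorem Matches.of_eventuallyContainsBlock {m p : ℕ → ℕ} {w y x : ℕ → α} (hm : StrictMono m)
    (hp : StrictMono p) (h : EventuallyContainsBlock m p {k | EqOn w y (Ico (p k) (p (k + 1)))})
    (hx : Matches m w x) : Matches p y x := by
  refine frequently_atTop.mpr fun K => ?_
  obtain ⟨j, hxw, ⟨k, hwy, hjk, hkj⟩, hKj⟩ :=
    (hx.and_eventually (h.and (hm.tendsto_atTop.eventually_ge_atTop (p K)))).exists
  refine ⟨k, hp.le_iff_le.mp (hKj.trans hjk), fun i hi => ?_⟩
  rw [hxw ⟨hjk.trans hi.1, hi.2.trans_le hkj⟩, hwy hi]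

theorem exists_matches_forall_not_eqOn {m p : ℕ → ℕ} (hm : StrictMono m) (hp : StrictMono p)
    (hbad : ¬ EventuallyContainsBlock m p univ) (y : ℕ → α) {c c' : α} (hc : c' ≠ c) :
    ∃ x, Matches m y x ∧ ∀ k, ¬ EqOn x (fun _ => c) (Ico (p k) (p (k + 1))) := by
  classical
  obtain ⟨φ, hφ, hφbad⟩ := extraction_of_frequently_atTop (not_eventually.mp hbad)
  -- only every other bad block is used, so no `p`-block can straddle two blocks where `x = y`
  set t : ℕ → ℕ := fun n => φ (2 * n)
  have ht : StrictMono t := hφ.comp (strictMono_mul_left_of_pos two_pos)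
  have hgap : ∀ n n', t n' ≠ t n + 1 := fun n n' h => by
    rcases le_or_gt n' n with hle | hlt
    · have := ht.monotone hle
      omega
    · have h1 : t (n + 1) ≤ t n' := ht.monotone hlt
      have h2 := hφ (show 2 * n < 2 * n + 1 by omega)
      have h3 := hφ (show 2 * n + 1 < 2 * (n + 1) by omega)
      simp only [t] at h h1
      omega
  let x : ℕ → α := fun i => if ∃ n, i ∈ Ico (m (t n)) (m (t n + 1)) then y i else c'
  refine ⟨x, frequently_atTop.mpr fun N => ⟨t N, ht.id_le N, fun i hi => if_pos ⟨N, hi⟩⟩,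
    fun k hk => ?_⟩
  have hblock : ∀ i ∈ Ico (p k) (p (k + 1)), ∃ n, i ∈ Ico (m (t n)) (m (t n + 1)) :=
    fun i hi => by_contra fun h => hc ((if_neg h).symm.trans (hk hi))
  obtain ⟨n, hn⟩ := hblock (p k) ⟨le_rfl, hp (Nat.lt_succ_self k)⟩
  refine hφbad (2 * n) ⟨k, trivial, hn.1, not_lt.mp fun hlt => ?_⟩
  obtain ⟨n', hn'⟩ := hblock (m (t n + 1)) ⟨hn.2.le, hlt⟩
  have h1 := hm.le_iff_le.mp hn'.1
  have h2 := hm.lt_iff_lt.mp hn'.2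
  exact hgap n n' (by omega)

variable [TopologicalSpace α] [DiscreteTopology α]

theorem isMeagre_nonMatching {m : ℕ → ℕ} (hm : StrictMono m) (y : ℕ → α) :
    IsMeagre (nonMatching m y) := by
  set U : ℕ → Set (ℕ → α) := fun N => ⋃ j ≥ N, {x | EqOn x y (Ico (m j) (m (j + 1)))}
  have hUo : ∀ N, IsOpen (U N) := fun N =>
    isOpen_biUnion fun j _ => isOpen_setOf_eqOn y (finite_Ico _ _)
  have hUd : ∀ N, Dense (U N) := by
    intro N
    rw [(isTopologicalBasis_cylinders _).dense_iff]
    rintro _ ⟨x, n, rfl⟩ -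
    refine ⟨fun i => if i < n then x i else y i, fun i hi => if_pos hi,
      mem_iUnion₂.mpr ⟨max N n, le_max_left _ _, fun i hi => if_neg ?_⟩⟩
    have := (le_max_right N n).trans (hm.id_le _)
    have := hi.1
    omega
  refine mem_of_superset (countable_iInter_mem.mpr fun N => residual_of_dense_open (hUo N) (hUd N))
    fun x hx => not_not.mpr (frequently_atTop.mpr fun N => ?_)
  simpa [U] using mem_iInter.mp hx N

theorem exists_eqOn_Ico_subset [Finite α] [Nonempty α] {D : Set (ℕ → α)} (hDo : IsOpen D)
    (hDd : Dense D) (N : ℕ) : ∃ M, N < M ∧ ∃ y : ℕ → α, {x | EqOn x y (Ico N M)} ⊆ D := by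
  classical
  have := Fintype.ofFinite α
  suffices ∀ P : Finset (Fin N → α), ∃ M, N < M ∧ ∃ y : ℕ → α,
      ∀ x, (fun i : Fin N => x i) ∈ P → EqOn x y (Ico N M) → x ∈ D by
    obtain ⟨M, hM, y, hy⟩ := this Finset.univ
    exact ⟨M, hM, y, fun x hx => hy x (Finset.mem_univ _) hx⟩
  intro P
  induction P using Finset.induction_on with
  | empty => exact ⟨N + 1, N.lt_succ_self, fun _ => Classical.arbitrary α, by simp⟩
  | insert s P _ ih =>
    obtain ⟨M, hNM, y, hy⟩ := ih
    set q : ℕ → α := fun i => if h : i < N then s ⟨i, h⟩ else y i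
    obtain ⟨x₀, hx₀D, hx₀q⟩ :=
      hDd.exists_mem_open (isOpen_cylinder _ q M) ⟨q, self_mem_cylinder q M⟩
    obtain ⟨n, hn⟩ := exists_cylinder_subset hDo hx₀D
    refine ⟨max M n + 1, by omega, x₀, fun x hxP hx => ?_⟩
    rcases Finset.mem_insert.mp hxP with rfl | hxP
    · refine hn fun i hi => ?_
      by_cases hiN : i < N
      · calc x i = q i := by simp [q, hiN]
          _ = x₀ i := (hx₀q i (by omega)).symm
      · exact hx ⟨not_lt.mp hiN, by omega⟩
    · refine hy x hxP fun i hi => ?_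
      calc x i = x₀ i := hx ⟨hi.1, by have := hi.2; omega⟩
        _ = q i := hx₀q i hi.2
        _ = y i := by simp [q, not_lt.mpr hi.1]

theorem exists_subset_nonMatching [Finite α] [Nonempty α] {A : Set (ℕ → α)} (hA : IsMeagre A) :
    ∃ m, StrictMono m ∧ ∃ y, A ⊆ nonMatching m y := by
  obtain ⟨D, hDo, hDd, hDA⟩ := hA.exists_isOpen_dense_iInter_subset_compl
  have hstep : ∀ j N, ∃ M, N < M ∧ ∃ y : ℕ → α, {x | EqOn x y (Ico N M)} ⊆ ⋂ k ∈ Iic j, D k :=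
    fun j => exists_eqOn_Ico_subset ((finite_Iic j).isOpen_biInter fun k _ => hDo k)
      (dense_biInter_of_isOpen (fun k _ => hDo k) (finite_Iic j).countable fun k _ => hDd k)
  -- agreeing with `Y j (m j)` on the `j`-th block forces membership in `D 0, …, D j`
  choose M hM Y hY using hstep
  let m : ℕ → ℕ := fun j => Nat.rec 0 (fun j a => M j a) j
  have hm : StrictMono m := strictMono_nat_of_lt_succ fun j => hM j (m j)
  have hblock : ∀ i, ∃ j, i < m (j + 1) := fun i => ⟨i, hm.id_le (i + 1)⟩
  have hfind : ∀ {i j}, i ∈ Ico (m j) (m (j + 1)) → Nat.find (hblock i) = j := fun hi =>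
    (Nat.find_eq_iff _).mpr ⟨hi.2, fun j' hj' => not_lt.mpr ((hm.monotone hj').trans hi.1)⟩
  refine ⟨m, hm, fun i => Y (Nat.find (hblock i)) (m (Nat.find (hblock i))) i, fun x hxA hx => ?_⟩
  obtain ⟨k, hk⟩ : ∃ k, x ∉ D k := by
    by_contra! h
    exact hDA (mem_iInter.mpr h) hxA
  obtain ⟨j, hjk, hj⟩ := frequently_atTop.mp hx k
  have hxY : EqOn x (Y j (m j)) (Ico (m j) (m (j + 1))) := fun i hi => by
    rw [hj hi]
    dsimp only
    rw [hfind hi]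
  exact hk (mem_iInter₂.mp (hY j (m j) hxY) k hjk)

theorem not_isMeagre_iUnion_nonMatching [Finite α] [Nontrivial α] {F : Set (ℕ → ℕ)}
    (hF : ∀ g : ℕ → ℕ, ∃ f ∈ F, ¬ ∀ᶠ n in atTop, f n ≤ g n) (c : α) :
    ¬ IsMeagre (⋃ f ∈ F, nonMatching (gapPartition (partialSups f)) fun _ => c) := by
  intro hmeagre
  obtain ⟨c', hc⟩ := exists_ne c
  obtain ⟨m, hm, y, hsub⟩ := exists_subset_nonMatching hmeagre
  obtain ⟨f, hfF, hf⟩ := hF fun n => m (n + 2)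
  refine hf ((eventually_le_of_eventuallyContainsBlock (p := gapPartition (partialSups f)) hm
    (partialSups f).monotone (fun k => ?_) ?_).mono fun n hn => (le_partialSups f n).trans hn)
  · rw [gapPartition_succ]
    omega
  · by_contra hbad
    obtain ⟨x, hxm, hxp⟩ :=
      exists_matches_forall_not_eqOn hm (strictMono_gapPartition _) hbad y hc
    refine hsub (mem_biUnion hfF fun hx => ?_) hxm
    obtain ⟨k, hk⟩ := hx.exists
    exact hxp k hk

theorem isMeagre_iUnion_of_bounded_of_not_covered [Finite α] [Nonempty α] {ι : Type*}
    (hb : ∀ e : ι → ℕ → ℕ, ∃ g : ℕ → ℕ, ∀ i, ∀ᶠ n in atTop, e i n ≤ g n)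
    (hcov : ∀ B : ι → Set (ℕ → α), (∀ i, IsMeagre (B i)) → ∃ w, ∀ i, w ∉ B i)
    {A : ι → Set (ℕ → α)} (hA : ∀ i, IsMeagre (A i)) : IsMeagre (⋃ i, A i) := by
  choose mA hmA yA hAsub using fun i => exists_subset_nonMatching (hA i)
  obtain ⟨m, hm, hm_mA⟩ := exists_eventuallyContainsBlock hb hmA (G := fun _ => Set.univ)
    fun _ => (Eventually.of_forall fun _ => mem_univ _).frequently
  obtain ⟨w, hw⟩ := hcov _ fun i => isMeagre_nonMatching hm (yA i)
  obtain ⟨m', hm', hm'_m⟩ := exists_eventuallyContainsBlock hb (fun _ => hm)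
    (G := fun i => {j | EqOn w (yA i) (Ico (m j) (m (j + 1)))}) fun i => not_not.mp (hw i)
  refine (isMeagre_nonMatching hm' w).mono ?_
  rintro x ⟨_, ⟨i, rfl⟩, hxA⟩ hxw
  have hxm : Matches m (yA i) x := hxw.of_eventuallyContainsBlock hm' hm (hm'_m i)
  exact hAsub i hxA <| hxm.of_eventuallyContainsBlock hm (hmA i)
    ((hm_mA i).mono fun j ⟨k, _, hk⟩ => ⟨k, eqOn_refl _ _, hk⟩)

end IntervalPartition

namespace Real

open PiNat

variable {b : ℕ}

theorem ofDigits_eq_of_mem_cylinder {p x : ℕ → Fin b} {n : ℕ} (hx : x ∈ cylinder p n) :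
    ofDigits x = ∑ i ∈ Finset.range n, ofDigitsTerm p i +
      ((b : ℝ) ^ n)⁻¹ * ofDigits (fun i => x (i + n)) := by
  rw [ofDigits_eq_sum_add_ofDigits x n]
  congr 1
  exact Finset.sum_congr rfl fun i hi => by simp [ofDigitsTerm, hx i (Finset.mem_range.mp hi)]

theorem ofDigits_append (p d : ℕ → Fin b) (n : ℕ) :
    ofDigits (fun i => if i < n then p i else d (i - n)) =
      ∑ i ∈ Finset.range n, ofDigitsTerm p i + ((b : ℝ) ^ n)⁻¹ * ofDigits d := by
  rw [ofDigits_eq_of_mem_cylinder (p := p) fun i hi => if_pos hi]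
  simp

theorem sum_ofDigitsTerm_add_inv_pow_le_one (hb : 1 < b) (p : ℕ → Fin b) (n : ℕ) :
    ∑ i ∈ Finset.range n, ofDigitsTerm p i + ((b : ℝ) ^ n)⁻¹ ≤ 1 := by
  have := ofDigits_append p (fun _ => ⟨b - 1, Nat.sub_one_lt_of_lt hb⟩) n
  rw [ofDigits_const_last_eq_one' hb, mul_one] at this
  exact this ▸ ofDigits_le_one _

theorem ofDigits_eq_head_add (x : ℕ → Fin b) :
    ofDigits x = (b : ℝ)⁻¹ * (x 0 + ofDigits fun i => x (i + 1)) := by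
  rw [ofDigits_eq_sum_add_ofDigits x 1]
  simp only [Finset.range_one, ofDigitsTerm, Finset.sum_singleton, zero_add, pow_one]
  ring

theorem sum_range_succ_ofDigitsTerm (p : ℕ → Fin b) (n : ℕ) :
    ∑ i ∈ Finset.range (n + 1), ofDigitsTerm p i =
      (b : ℝ)⁻¹ * (p 0 + ∑ i ∈ Finset.range n, ofDigitsTerm (fun i => p (i + 1)) i) := by
  rw [Finset.sum_range_succ', mul_add, Finset.mul_sum, add_comm]
  congr 1
  · simp [ofDigitsTerm, mul_comm]
  · refine Finset.sum_congr rfl fun i _ => ?_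
    simp only [ofDigitsTerm, pow_succ', mul_inv_rev]
    ring

theorem mem_cylinder_of_ofDigits_mem_Ioo (hb : 1 < b) {p x : ℕ → Fin b} {n : ℕ}
    (h : ofDigits x ∈ Ioo (∑ i ∈ Finset.range n, ofDigitsTerm p i)
      (∑ i ∈ Finset.range n, ofDigitsTerm p i + ((b : ℝ) ^ n)⁻¹)) :
    x ∈ cylinder p n := by
  induction n generalizing p x with
  | zero => simp
  | succ n ih =>
    have hB : (0 : ℝ) < (b : ℝ)⁻¹ := by positivity
    have hu0 := ofDigits_nonneg fun i => x (i + 1)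
    have hu1 := ofDigits_le_one fun i => x (i + 1)
    have hv0 : 0 ≤ ∑ i ∈ Finset.range n, ofDigitsTerm (fun i => p (i + 1)) i :=
      Finset.sum_nonneg fun _ _ => ofDigitsTerm_nonneg
    have hv1 := sum_ofDigitsTerm_add_inv_pow_le_one hb (fun i => p (i + 1)) n
    rw [ofDigits_eq_head_add, sum_range_succ_ofDigitsTerm, pow_succ', mul_inv, ← mul_add] at h
    have h1 := lt_of_mul_lt_mul_left h.1 hB.le
    have h2 := lt_of_mul_lt_mul_left h.2 hB.le
    have h0 : x 0 = p 0 := by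
      have hxp : ((x 0 : ℕ) : ℝ) < (p 0 : ℕ) + 1 := by linarith
      have hpx : ((p 0 : ℕ) : ℝ) < (x 0 : ℕ) + 1 := by linarith
      norm_cast at hxp hpx
      exact Fin.ext (by omega)
    have htail := ih (p := fun i => p (i + 1)) (x := fun i => x (i + 1))
      ⟨by rw [h0] at h1; linarith, by rw [h0] at h2; linarith⟩
    rintro (_ | i) hi
    · exact h0
    · exact htail i (by omega)

theorem exists_Ioo_subset_image_ofDigits (hb : 1 < b) {U : Set (ℕ → Fin b)} (hU : IsOpen U)
    (hne : U.Nonempty) : ∃ a a', a < a' ∧ Ioo a a' ⊆ ofDigits '' U ∧ ofDigits ⁻¹' Ioo a a' ⊆ U := by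
  obtain ⟨p, hp⟩ := hne
  obtain ⟨n, hn⟩ := exists_cylinder_subset hU hp
  have hB : (0 : ℝ) < (b : ℝ) ^ n := by positivity
  refine ⟨_, _, lt_add_of_pos_right _ (inv_pos.mpr hB), fun t ht => ?_,
    fun x hx => hn (mem_cylinder_of_ofDigits_mem_Ioo hb hx)⟩
  set c := ∑ i ∈ Finset.range n, ofDigitsTerm p i
  have hs : (t - c) * b ^ n ∈ Icc (0 : ℝ) 1 := by
    refine ⟨mul_nonneg (sub_nonneg.mpr ht.1.le) hB.le, ?_⟩
    calc (t - c) * b ^ n ≤ ((b : ℝ) ^ n)⁻¹ * b ^ n := by gcongr; linarith [ht.2]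
      _ = 1 := inv_mul_cancel₀ hB.ne'
  obtain ⟨d, -, hd⟩ := ofDigits_SurjOn hb hs
  refine ⟨fun i => if i < n then p i else d (i - n), hn fun i hi => if_pos hi, ?_⟩
  rw [ofDigits_append, hd, mul_comm (t - c), ← mul_assoc, inv_mul_cancel₀ hB.ne', one_mul,
    add_sub_cancel]

theorem _root_.IsMeagre.preimage_ofDigits (hb : 1 < b) {s : Set ℝ} (hs : IsMeagre s) :
    IsMeagre (ofDigits (b := b) ⁻¹' s) :=
  hs.preimage_of_nonempty_interior_image continuous_ofDigits fun _ hU hne => by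
    obtain ⟨a, a', ha, hsub, -⟩ := exists_Ioo_subset_image_ofDigits hb hU hne
    exact (nonempty_Ioo.mpr ha).mono (interior_maximal hsub isOpen_Ioo)

theorem _root_.IsMeagre.image_ofDigits (hb : 1 < b) {s : Set (ℕ → Fin b)} (hs : IsMeagre s) :
    IsMeagre (ofDigits '' s) :=
  hs.image_of_exists_preimage_subset continuous_ofDigits fun _ hU hne => by
    obtain ⟨a, a', ha, hsub, hpre⟩ := exists_Ioo_subset_image_ofDigits hb hU hne
    obtain ⟨t, ht⟩ := nonempty_Ioo.mpr ha
    obtain ⟨x, -, rfl⟩ := hsub ht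
    exact ⟨_, isOpen_Ioo, ⟨x, ht⟩, hpre⟩

theorem _root_.IsMeagre.image_ofDigits_add (hb : 1 < b) {s : Set (ℕ → Fin b)} (hs : IsMeagre s)
    (z : ℝ) : IsMeagre ((fun x => ofDigits x + z) '' s) := by
  rw [← image_image (· + z)]
  exact (Homeomorph.addRight z).isInducing.isMeagre_image (hs.image_ofDigits hb)

theorem _root_.IsMeagre.preimage_ofDigits_add (hb : 1 < b) {s : Set ℝ} (hs : IsMeagre s) (z : ℝ) :
    IsMeagre ((fun x : ℕ → Fin b => ofDigits x + z) ⁻¹' s) :=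
  (hs.preimage_of_isOpenMap (continuous_add_const z) (isOpenMap_add_right z)).preimage_ofDigits hb

theorem exists_ofDigits_add_intCast_eq (hb : 1 < b) (r : ℝ) :
    ∃ (x : ℕ → Fin b) (z : ℤ), ofDigits x + z = r := by
  obtain ⟨x, -, hx⟩ := ofDigits_SurjOn hb ⟨Int.fract_nonneg r, (Int.fract_lt_one r).le⟩
  exact ⟨x, ⌊r⌋, by rw [hx, Int.fract_add_floor]⟩

end Real

open IntervalPartition Real

theorem exists_meagre_cover_real : ∃ S : Set (Set ℝ), (∀ A ∈ S, IsMeagre A) ∧ ⋃₀ S = Set.univ :=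
  ⟨range singleton, forall_mem_range.mpr fun r => IsNowhereDense.isMeagre <| by
    rw [IsNowhereDense, closure_singleton, interior_singleton], by
    rw [sUnion_range, iUnion_of_singleton]⟩

theorem boundingNumber_le_mk {F : Set (ℕ → ℕ)}
    (hF : ∀ g : ℕ → ℕ, ∃ f ∈ F, ¬ ∀ᶠ n in atTop, f n ≤ g n) : boundingNumber ≤ #F :=
  csInf_le' ⟨F, rfl, hF⟩

theorem covMeager_le_mk {S : Set (Set ℝ)} (hS : ∀ A ∈ S, IsMeagre A) (hSu : ⋃₀ S = Set.univ) :
    covMeager ≤ #S :=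
  csInf_le' ⟨S, rfl, hS, hSu⟩

theorem addMeager_le_mk {S : Set (Set ℝ)} (hS : ∀ A ∈ S, IsMeagre A) (hSu : ¬ IsMeagre (⋃₀ S)) :
    addMeager ≤ #S :=
  csInf_le' ⟨S, rfl, hS, hSu⟩

theorem mk_prod_int {ι : Type} (hι : ℵ₀ ≤ #ι) : #(ι × ℤ) = #ι := by
  rw [mk_prod, lift_id, lift_id, mk_int, mul_aleph0_eq hι]

theorem exists_bound_of_mk_lt_boundingNumber {ι : Type} (e : ι → ℕ → ℕ)
    (h : #ι < boundingNumber) : ∃ g : ℕ → ℕ, ∀ i, ∀ᶠ n in atTop, e i n ≤ g n := by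
  by_contra hunb
  refine h.not_ge ((boundingNumber_le_mk (F := range e) fun g => ?_).trans mk_range_le)
  obtain ⟨i, hi⟩ := not_forall.mp (not_exists.mp hunb g)
  exact ⟨e i, mem_range_self i, hi⟩

theorem exists_forall_notMem_of_mk_lt_covMeager {ι : Type} {B : ι → Set (ℕ → Fin 2)}
    (hB : ∀ i, IsMeagre (B i)) (hι : ℵ₀ ≤ #ι) (h : #ι < covMeager) : ∃ w, ∀ i, w ∉ B i := by
  by_contra! hcover
  refine h.not_ge ((covMeager_le_mk (S := range fun q : ι × ℤ =>
    (fun x => ofDigits x + (q.2 : ℝ)) '' B q.1) ?_ ?_).trans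
      (mk_range_le.trans (mk_prod_int hι).le))
  · rintro _ ⟨q, rfl⟩
    exact (hB q.1).image_ofDigits_add one_lt_two _
  · refine eq_univ_of_forall fun r => ?_
    obtain ⟨x, z, rfl⟩ := exists_ofDigits_add_intCast_eq one_lt_two r
    obtain ⟨i, hi⟩ := hcover x
    exact ⟨_, ⟨(i, z), rfl⟩, x, hi, rfl⟩

theorem isMeagre_sUnion_of_mk_lt {S : Set (Set ℝ)} (hS : ∀ A ∈ S, IsMeagre A)
    (hb : #S < boundingNumber) (hc : #S < covMeager) : IsMeagre (⋃₀ S) := by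
  rcases le_or_gt #S ℵ₀ with hcount | hunc
  · rw [sUnion_eq_biUnion]
    exact isMeagre_biUnion (countable_coe_iff.mp (mk_le_aleph0_iff.mp hcount)) hS
  have hι : #(S × ℤ) = #S := mk_prod_int hunc.le
  let A : S × ℤ → Set (ℕ → Fin 2) := fun q => (fun x => ofDigits x + (q.2 : ℝ)) ⁻¹' q.1
  have hA : IsMeagre (⋃ q, A q) :=
    isMeagre_iUnion_of_bounded_of_not_covered
      (fun e => exists_bound_of_mk_lt_boundingNumber e (hι ▸ hb))
      (fun _ hB => exists_forall_notMem_of_mk_lt_covMeager hB (hι ▸ hunc.le) (hι ▸ hc))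
      fun q => (hS _ q.1.2).preimage_ofDigits_add one_lt_two _
  refine (isMeagre_iUnion fun z : ℤ => hA.image_ofDigits_add one_lt_two z).mono ?_
  rintro r ⟨s, hs, hr⟩
  obtain ⟨x, z, rfl⟩ := exists_ofDigits_add_intCast_eq one_lt_two r
  exact mem_iUnion.mpr ⟨z, x, mem_iUnion.mpr ⟨(⟨s, hs⟩, z), hr⟩, rfl⟩

theorem addMeager_le_covMeager : addMeager ≤ covMeager := by
  obtain ⟨S, hS, hSu⟩ := exists_meagre_cover_real
  exact csInf_le_csInf' ⟨_, S, rfl, hS, hSu⟩ fun _ ⟨S, hc, hS, hSu⟩ =>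
    ⟨S, hc, hS, hSu ▸ not_isMeagre_of_isOpen isOpen_univ univ_nonempty⟩

theorem exists_unbounded_mk_eq_boundingNumber : ∃ F : Set (ℕ → ℕ), #F = boundingNumber ∧
    ∀ g : ℕ → ℕ, ∃ f ∈ F, ¬ ∀ᶠ n in atTop, f n ≤ g n :=
  csInf_mem (s := {c | ∃ F : Set (ℕ → ℕ), #F = c ∧
      ∀ g : ℕ → ℕ, ∃ f ∈ F, ¬ ∀ᶠ n in atTop, f n ≤ g n})
    ⟨_, Set.univ, rfl, fun g => ⟨g + 1, mem_univ _, fun h => by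
      obtain ⟨n, hn⟩ := h.exists
      exact absurd hn (by simp)⟩⟩

theorem addMeager_le_boundingNumber : addMeager ≤ boundingNumber := by
  obtain ⟨F, hFb, hF⟩ := exists_unbounded_mk_eq_boundingNumber
  let S := (fun f => ofDigits '' nonMatching (gapPartition (partialSups f)) fun _ => (0 : Fin 2))
    '' F
  refine (addMeager_le_mk (S := S) ?_ fun h => ?_).trans (mk_image_le.trans hFb.le)
  · rintro _ ⟨f, -, rfl⟩
    exact (isMeagre_nonMatching (strictMono_gapPartition _) _).image_ofDigits one_lt_two
  · refine not_isMeagre_iUnion_nonMatching hF (0 : Fin 2)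
      ((h.preimage_ofDigits one_lt_two).mono ?_)
    exact iUnion₂_subset fun f hf x hx => ⟨_, mem_image_of_mem _ hf, mem_image_of_mem _ hx⟩

theorem min_le_addMeager : min boundingNumber covMeager ≤ addMeager := by
  obtain ⟨S, hS, hSu⟩ := exists_meagre_cover_real
  refine le_csInf ⟨_, S, rfl, hS, hSu ▸ not_isMeagre_of_isOpen isOpen_univ univ_nonempty⟩ ?_
  rintro _ ⟨S, rfl, hS, hSu⟩
  by_contra! h
  exact hSu (isMeagre_sUnion_of_mk_lt hS (lt_min_iff.mp h).1 (lt_min_iff.mp h).2)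

/-- `add(M) = min{b, cov(M)}`. -/
theorem addMeager_eq_min : addMeager = min boundingNumber covMeager :=
  le_antisymm (le_min addMeager_le_boundingNumber addMeager_le_covMeager) min_le_addMeager
end

section
/- Every γ-set of reals has strong measure zero: if every open ω-cover of a set of reals X contains a γ-subcover, then X has strong measure zero. -/
open Filter Set Cardinal

/-!
A γ-set is Rothberger, and a Rothberger space has strong measure zero: select one ball of
radius `ε n / 3` from the `n`-th cover by such balls.

For an infinite γ-set `X`, fix distinct points `x n` and open covers `U i`. The sets
`(σ ⟨n, 0⟩ ∪ ⋯ ∪ σ ⟨n, K - 1⟩) \ {x n}` with `σ i ∈ U i`, where `⟨n, k⟩ = Nat.pair n k`, form an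
open ω-cover. Each `x n` is missed by only finitely many members of a γ-subcover, so infinitely
many tags `n` occur in it, and one member for each occurring tag is still a γ-cover, hence a cover.
Different tags use disjoint blocks of indices, so the selections `σ` of these members merge into a
single selection from the `U i`.
-/

section Selection

variable {X : Type*}

theorem IsGammaCover.exists_mem_invFunOn {V : Set (Set X)} (hV : IsGammaCover V)
    {x : ℕ → X} {tag : Set X → ℕ} (htag : ∀ v ∈ V, x (tag v) ∉ v) (p : X) : ∃ n ∈ tag '' V, p ∈ Function.invFunOn tag V n := by
  have hunbdd : ¬ BddAbove (tag '' V) := by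
    rintro ⟨M, hM⟩
    refine hV.1 (((finite_Iic M).biUnion fun n _ => hV.2 (x n)).subset fun v hv => ?_)
    exact mem_biUnion (hM (mem_image_of_mem tag hv)) ⟨hv, htag v hv⟩
  have hinf : (Function.invFunOn tag V '' (tag '' V)).Infinite :=
    (infinite_of_not_bddAbove hunbdd).image (Function.invFunOn_injOn_image tag V)
  by_contra! hp
  refine hinf ((hV.2 p).subset ?_)
  rintro _ ⟨n, hn, rfl⟩
  exact ⟨Function.invFunOn_mem hn, hp n hn⟩

def tagPiece (x : ℕ → X) (n K : ℕ) (σ : ℕ → Set X) : Set X :=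
  (⋃ k < K, σ (Nat.pair n k)) \ {x n}

def tagPieces (U : ℕ → Set (Set X)) (x : ℕ → X) : Set (Set X) :=
  {v | ∃ n K σ, (∀ i, σ i ∈ U i) ∧ v = tagPiece x n K σ}

theorem tag_notMem_tagPiece (x : ℕ → X) (n K : ℕ) (σ : ℕ → Set X) :
    x n ∉ tagPiece x n K σ :=
  fun h => h.2 rfl

theorem isOmegaCover_tagPieces {U : ℕ → Set (Set X)} (hU : ∀ i, ⋃₀ U i = Set.univ)
    {x : ℕ → X} (hx : Function.Injective x) : IsOmegaCover (tagPieces U x) := by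
  choose c hcU hc using fun i y => sUnion_eq_univ_iff.1 (hU i) y
  refine ⟨fun ⟨n, K, σ, _, hv⟩ => tag_notMem_tagPiece x n K σ (hv ▸ mem_univ _), fun F hF => ?_⟩
  obtain ⟨n, -, hn⟩ := infinite_univ.exists_notMem_finite (hF.preimage hx.injOn)
  set L := hF.toFinset.toList
  -- The `k`-th point of `F` is covered by the `k`-th set of the block of `n`.
  let σ : ℕ → Set X := fun i => c i (L.getD i.unpair.2 (x 0))
  refine ⟨tagPiece x n L.length σ, ⟨n, _, σ, fun i => hcU _ _, rfl⟩, fun y hy => ⟨?_, ?_⟩⟩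
  · obtain ⟨k, hk, rfl⟩ := List.mem_iff_getElem.1 (by simpa [L] using hy : y ∈ L)
    refine mem_iUnion₂.2 ⟨k, hk, ?_⟩
    simpa only [σ, Nat.unpair_pair, List.getD_eq_getElem _ _ hk] using hc _ L[k]
  · rintro rfl
    exact hn hy

variable [TopologicalSpace X]

theorem rothbergerProp_of_countable [Countable X] [Nonempty X] : RothbergerProp X := by
  intro U hU
  obtain ⟨e, he⟩ := exists_surjective_nat X
  choose f hfU hf using fun n => sUnion_eq_univ_iff.1 (hU n).2 (e n)
  refine ⟨f, hfU, eq_univ_of_forall fun p => ?_⟩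
  obtain ⟨n, rfl⟩ := he p
  exact mem_iUnion.2 ⟨n, hf n⟩

theorem isOpen_of_mem_tagPieces [T1Space X] {U : ℕ → Set (Set X)} (hU : ∀ i, ∀ s ∈ U i, IsOpen s)
    {x : ℕ → X} : ∀ v ∈ tagPieces U x, IsOpen v := by
  rintro _ ⟨n, K, σ, hσ, rfl⟩
  exact (isOpen_biUnion fun k _ => hU _ _ (hσ _)).sdiff isClosed_singleton

theorem IsGammaSet.rothbergerProp_of_infinite [T1Space X] [Infinite X] (h : IsGammaSet X) :
    RothbergerProp X := by
  intro U hU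
  obtain ⟨x, hx⟩ : ∃ x : ℕ → X, Function.Injective x :=
    ⟨_, (Infinite.natEmbedding X).injective⟩
  choose c hcU hc using fun i y => sUnion_eq_univ_iff.1 (hU i).2 y
  obtain ⟨V, hVsub, hV⟩ :=
    h _ (isOpen_of_mem_tagPieces fun i => (hU i).1) (isOmegaCover_tagPieces (fun i => (hU i).2) hx)
  have hdecode : ∀ v, ∃ d : ℕ × ℕ × (ℕ → Set X),
      (∀ i, d.2.2 i ∈ U i) ∧ (v ∈ V → v = tagPiece x d.1 d.2.1 d.2.2) := by
    intro v
    by_cases hv : v ∈ V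
    · obtain ⟨n, K, σ, hσ, rfl⟩ := hVsub hv
      exact ⟨(n, K, σ), hσ, fun _ => rfl⟩
    · exact ⟨(0, 0, fun i => c i (x 0)), fun i => hcU i _, fun h => absurd h hv⟩
  choose d hdU hd using hdecode
  let w := Function.invFunOn (fun v => (d v).1) V
  -- Distinct blocks `{⟨n, k⟩ | k ∈ ℕ}` never clash, so the pieces `w n` can be merged.
  refine ⟨fun i => (d (w i.unpair.1)).2.2 i, fun i => hdU _ i, eq_univ_of_forall fun p => ?_⟩
  have htagV : ∀ v ∈ V, x (d v).1 ∉ v := fun v hv => by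
    simpa only [← hd v hv] using tag_notMem_tagPiece x (d v).1 (d v).2.1 (d v).2.2
  obtain ⟨n, hn, hp⟩ : ∃ n ∈ (fun v => (d v).1) '' V, p ∈ w n :=
    hV.exists_mem_invFunOn htagV p
  have hwV : w n ∈ V := Function.invFunOn_mem hn
  have htag : (d (w n)).1 = n := Function.invFunOn_eq hn
  rw [hd _ hwV, tagPiece, htag] at hp
  obtain ⟨k, -, hk⟩ := mem_iUnion₂.1 hp.1
  exact mem_iUnion.2 ⟨Nat.pair n k, by simpa only [Nat.unpair_pair] using hk⟩

theorem IsGammaSet.rothbergerProp [T1Space X] [Nonempty X] (h : IsGammaSet X) :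
    RothbergerProp X := by
  cases finite_or_infinite X
  · exact rothbergerProp_of_countable
  · exact h.rothbergerProp_of_infinite

end Selection

section StrongMeasureZero

variable {X : Type*} [PseudoMetricSpace X]

theorem strongMeasureZero_of_isEmpty [IsEmpty X] : StrongMeasureZero X :=
  fun _ hε => ⟨fun _ => ∅, eq_univ_of_forall isEmptyElim, fun n =>
    Metric.ediam_empty.trans_lt (ENNReal.ofReal_pos.2 (hε n))⟩

theorem RothbergerProp.strongMeasureZero (h : RothbergerProp X) : StrongMeasureZero X := by
  intro ε hε
  obtain ⟨f, hfU, hf⟩ := h (fun n => range fun x => Metric.ball x (ε n / 3)) fun n =>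
    ⟨by rintro _ ⟨x, rfl⟩; exact Metric.isOpen_ball,
      sUnion_eq_univ_iff.2 fun y => ⟨_, ⟨y, rfl⟩, Metric.mem_ball_self (by linarith [hε n])⟩⟩
  refine ⟨f, hf, fun n => ?_⟩
  obtain ⟨x, hx⟩ := hfU n
  rw [← hx]
  calc Metric.ediam (Metric.ball x (ε n / 3)) ≤ ENNReal.ofReal (2 * (ε n / 3)) :=
        Metric.ediam_le_of_forall_dist_le fun a ha b hb =>
          (dist_triangle_right a b x).trans
            (by linarith [Metric.mem_ball.1 ha, Metric.mem_ball.1 hb])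
    _ < ENNReal.ofReal (ε n) := (ENNReal.ofReal_lt_ofReal_iff (hε n)).2 (by linarith [hε n])

end StrongMeasureZero

/-- every γ-set of reals has strong measure zero. -/
theorem strongMeasureZero_of_gammaSet (X : Set ℝ) (h : IsGammaSet ↥X) :
    StrongMeasureZero ↥X := by
  cases isEmpty_or_nonempty X
  · exact strongMeasureZero_of_isEmpty
  · exact h.rothbergerProp.strongMeasureZero
end

section
/- There exists (in ZFC) a set of reals which has the Menger property Ufin(O,O) but does not have the Hurewicz property Ufin(O,Γ). -/
open Filter Set Cardinal

/-!
The Baire space `ℕ → ℕ` embeds into `ℝ` (through the Cantor set), so it suffices to find a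
Menger subset of `ℕ → ℕ` that is unbounded for eventual domination: a Hurewicz space has bounded
continuous images in `ℕ → ℕ`, since finitely many members of the cover by the sets
`{x | x n = m}` bound the `n`-th coordinate.

Fewer than `𝔡` points of a Lindelöf space are covered by finite subfamilies of any sequence of
open covers, because the functions recording the indices of their covering sets do not form a
dominating family. Hence a Lindelöf space is Menger as soon as it is concentrated on a countable
set `Q` (every open set containing `Q` misses fewer than `𝔡` points): cover `Q` one point at a
time, and the fewer than `𝔡` remaining points by finite subfamilies.

If some unbounded family has fewer than `𝔡` members, it is Menger. Otherwise every family of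
size `< 𝔡` is bounded, and a dominating family of size `𝔡` can be turned into a family `G` of
size `𝔡` in which each function is dominated from some index on. Each `G i` is coded into a
sparse function made of long runs of zeros separated by spikes. Once `G i` is large, the runs
put it into any given open neighbourhood of the eventually zero functions, while the spikes
escape any given bound. The eventually zero functions together with these sparse functions
therefore form a concentrated unbounded set.
-/

open Topology Encodable Function

noncomputable def dominatingNumber : Cardinal :=
  sInf { c : Cardinal | ∃ F : Set (ℕ → ℕ), #F = c ∧ ∀ g : ℕ → ℕ, ∃ f ∈ F, g ≤ᶠ[atTop] f }

theorem exists_dominating_mk_eq_dominatingNumber :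
    ∃ D : Set (ℕ → ℕ), #D = dominatingNumber ∧ ∀ g : ℕ → ℕ, ∃ f ∈ D, g ≤ᶠ[atTop] f :=
  csInf_mem (s := { c : Cardinal | ∃ F : Set (ℕ → ℕ), #F = c ∧ ∀ g, ∃ f ∈ F, g ≤ᶠ[atTop] f })
    ⟨_, Set.univ, rfl, fun g => ⟨g, mem_univ g, EventuallyLE.rfl⟩⟩

theorem exists_forall_not_eventuallyLE_of_mk_lt_dominatingNumber {F : Set (ℕ → ℕ)}
    (hF : #F < dominatingNumber) : ∃ g : ℕ → ℕ, ∀ f ∈ F, ¬ g ≤ᶠ[atTop] f := by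
  by_contra! h
  exact hF.not_ge (csInf_le' ⟨F, rfl, h⟩)

theorem Set.Finite.exists_subset_image_Iic {α : Type*} {f : ℕ → α} {s : Set α} (hs : s.Finite)
    (hsf : s ⊆ range f) : ∃ N, s ⊆ f '' Iic N := by
  choose k hk using hsf
  obtain ⟨N, hN⟩ := (hs.dependent_image fun _ hx => k hx).bddAbove
  exact ⟨N, fun x hx => ⟨k hx, hN ⟨x, hx, rfl⟩, hk hx⟩⟩

theorem LindelofSpace.exists_nat_subcover {X : Type*} [TopologicalSpace X] [LindelofSpace X]
    [Nonempty X] {U : Set (Set X)} (hUo : ∀ s ∈ U, IsOpen s) (hU : ⋃₀ U = Set.univ) :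
    ∃ v : ℕ → Set X, (∀ k, v k ∈ U) ∧ ⋃ k, v k = Set.univ := by
  obtain ⟨r, hr, hcov⟩ := isLindelof_univ.elim_countable_subcover (fun s : U => s.1)
    (fun s => hUo _ s.2) (by rw [← sUnion_eq_iUnion, hU])
  obtain ⟨v, rfl⟩ := hr.exists_eq_range <| by
    obtain ⟨s, hs, -⟩ := mem_iUnion₂.1 (hcov (mem_univ (Classical.arbitrary X)))
    exact ⟨s, hs⟩
  refine ⟨fun k => v k, fun k => (v k).2, eq_univ_of_univ_subset fun x hx => ?_⟩
  obtain ⟨_, ⟨k, rfl⟩, hxk⟩ := mem_iUnion₂.1 (hcov hx)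
  exact mem_iUnion.2 ⟨k, hxk⟩

theorem image_image_subset_of_subset_image_preimage {α β : Type*} {f : α → β}
    (hsurj : Surjective f) {U : Set (Set β)} {F : Set (Set α)} (hF : F ⊆ preimage f '' U) :
    image f '' F ⊆ U :=
  forall_mem_image.2 fun _ ht => by
    obtain ⟨s, hs, rfl⟩ := hF ht
    rwa [image_preimage_eq s hsurj]

theorem mem_sUnion_image_image {α β : Type*} {f : α → β} {F : Set (Set α)} {x : α}
    (hx : x ∈ ⋃₀ F) :
    f x ∈ ⋃₀ (image f '' F) := by
  obtain ⟨t, ht, hxt⟩ := hx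
  exact ⟨f '' t, mem_image_of_mem _ ht, mem_image_of_mem f hxt⟩

section ContinuousImage

variable {X Y : Type*} [TopologicalSpace X] [TopologicalSpace Y] {f : X → Y}

theorem isOpenCover_preimage (hf : Continuous f) {U : Set (Set Y)}
    (hU : (∀ s ∈ U, IsOpen s) ∧ ⋃₀ U = Set.univ) :
    (∀ s ∈ preimage f '' U, IsOpen s) ∧ ⋃₀ (preimage f '' U) = Set.univ := by
  refine ⟨forall_mem_image.2 fun s hs => (hU.1 s hs).preimage hf, ?_⟩
  rw [sUnion_image, ← preimage_iUnion₂, ← sUnion_eq_biUnion, hU.2, preimage_univ]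

theorem MengerProp.of_surjective (hX : MengerProp X) (hf : Continuous f) (hsurj : Surjective f) :
    MengerProp Y := by
  intro U hU
  obtain ⟨F, hF, hcov⟩ := hX _ fun n => isOpenCover_preimage hf (hU n)
  refine ⟨fun n => image f '' F n, fun n => ⟨image_image_subset_of_subset_image_preimage hsurj
    (hF n).1, (hF n).2.image _⟩, eq_univ_of_forall fun y => ?_⟩
  obtain ⟨x, rfl⟩ := hsurj y
  obtain ⟨n, hn⟩ := mem_iUnion.1 (hcov ▸ mem_univ x)
  exact mem_iUnion.2 ⟨n, mem_sUnion_image_image hn⟩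

theorem HurewiczProp.of_surjective (hX : HurewiczProp X) (hf : Continuous f)
    (hsurj : Surjective f) : HurewiczProp Y := by
  intro U hU
  obtain ⟨F, hF, hcov⟩ := hX _ fun n => isOpenCover_preimage hf (hU n)
  refine ⟨fun n => image f '' F n, fun n => ⟨image_image_subset_of_subset_image_preimage hsurj
    (hF n).1, (hF n).2.image _⟩, fun y => ?_⟩
  obtain ⟨x, rfl⟩ := hsurj y
  exact (hcov x).mono fun n => mem_sUnion_image_image

end ContinuousImage

theorem HurewiczProp.exists_eventuallyLE_of_continuous {X : Type*} [TopologicalSpace X]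
    (hX : HurewiczProp X) {φ : X → ℕ → ℕ} (hφ : Continuous φ) :
    ∃ g : ℕ → ℕ, ∀ x, φ x ≤ᶠ[atTop] g := by
  let V : ℕ → ℕ → Set X := fun n m => {x | φ x n = m}
  have hV : ∀ n, (∀ s ∈ range (V n), IsOpen s) ∧ ⋃₀ range (V n) = Set.univ := fun n =>
    ⟨forall_mem_range.2 fun m => (isOpen_discrete {m}).preimage ((continuous_apply n).comp hφ),
      eq_univ_of_forall fun x => ⟨V n (φ x n), mem_range_self _, rfl⟩⟩
  obtain ⟨F, hF, hcov⟩ := hX _ hV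
  choose g hg using fun n => (hF n).2.exists_subset_image_Iic (hF n).1
  refine ⟨g, fun x => (hcov x).mono fun n ⟨s, hs, hxs⟩ => ?_⟩
  obtain ⟨m, hm, rfl⟩ := hg n hs
  exact (show φ x n = m from hxs) ▸ hm

section Menger

variable {X : Type} [TopologicalSpace X] [LindelofSpace X]

theorem exists_finite_subfamilies_cover_of_mk_lt_dominatingNumber {U : ℕ → Set (Set X)}
    (hU : ∀ n, (∀ s ∈ U n, IsOpen s) ∧ ⋃₀ U n = Set.univ) {Z : Set X}
    (hZ : #Z < dominatingNumber) :
    ∃ F : ℕ → Set (Set X), (∀ n, F n ⊆ U n ∧ (F n).Finite) ∧ Z ⊆ ⋃ n, ⋃₀ F n := by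
  rcases Z.eq_empty_or_nonempty with rfl | ⟨z, -⟩
  · exact ⟨fun _ => ∅, fun _ => ⟨empty_subset _, finite_empty⟩, empty_subset _⟩
  have : Nonempty X := ⟨z⟩
  choose v hvU hv using fun n => LindelofSpace.exists_nat_subcover (hU n).1 (hU n).2
  have hfind : ∀ x n, ∃ k, x ∈ v n k := fun x n => mem_iUnion.1 ((hv n).symm ▸ mem_univ x)
  classical
  let index : X → ℕ → ℕ := fun x n => Nat.find (hfind x n)
  obtain ⟨H, hH⟩ :=
    exists_forall_not_eventuallyLE_of_mk_lt_dominatingNumber (mk_image_le.trans_lt hZ)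
  refine ⟨fun n => v n '' Iio (H n),
    fun n => ⟨image_subset_iff.2 fun k _ => hvU n k, (finite_Iio _).image _⟩, fun x hx => ?_⟩
  obtain ⟨n, hn⟩ := (not_eventually.1 (hH _ (mem_image_of_mem index hx))).exists
  exact mem_iUnion.2 ⟨n, _, mem_image_of_mem _ (not_le.1 hn), Nat.find_spec (hfind x n)⟩

theorem mengerProp_of_mk_lt_dominatingNumber (hX : #X < dominatingNumber) : MengerProp X := by
  intro U hU
  obtain ⟨F, hF, hcov⟩ :=
    exists_finite_subfamilies_cover_of_mk_lt_dominatingNumber hU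
      (Z := Set.univ) (by rwa [mk_univ])
  exact ⟨F, hF, univ_subset_iff.1 hcov⟩

theorem mengerProp_of_concentrated (q : ℕ → X)
    (hq : ∀ V : Set X, IsOpen V → range q ⊆ V → #↥Vᶜ < dominatingNumber) : MengerProp X := by
  intro U hU
  choose c hcU hqc using fun n => mem_sUnion.1 ((hU n).2 ▸ mem_univ (q n))
  have hc : IsOpen (⋃ n, c n) := isOpen_iUnion fun n => (hU n).1 _ (hcU n)
  obtain ⟨F, hF, hcov⟩ := exists_finite_subfamilies_cover_of_mk_lt_dominatingNumber hU
    (hq _ hc (range_subset_iff.2 fun n => mem_iUnion.2 ⟨n, hqc n⟩))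
  refine ⟨fun n => insert (c n) (F n),
    fun n => ⟨insert_subset (hcU n) (hF n).1, (hF n).2.insert _⟩, eq_univ_of_forall fun x => ?_⟩
  by_cases hx : x ∈ ⋃ n, c n
  · obtain ⟨n, hn⟩ := mem_iUnion.1 hx
    exact mem_iUnion.2 ⟨n, c n, mem_insert _ _, hn⟩
  · obtain ⟨n, s, hs, hxs⟩ := mem_iUnion.1 (hcov hx)
    exact mem_iUnion.2 ⟨n, s, mem_insert_of_mem _ hs, hxs⟩

end Menger

theorem isEmbedding_decide_eq : IsEmbedding fun (n : ℕ) (m : ℕ) => decide (m = n) := by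
  refine ⟨isInducing_iff_nhds.2 fun n => le_antisymm
    (continuous_of_discreteTopology.tendsto n).le_comap ?_,
    fun a b h => by simpa using congrFun h a⟩
  have hopen : IsOpen ((fun p : ℕ → Bool => p n) ⁻¹' {true}) :=
    (isOpen_discrete _).preimage (continuous_apply n)
  rw [nhds_discrete ℕ, le_pure_iff]
  refine mem_comap.2 ⟨_, hopen.mem_nhds (by simp), fun m hm => ?_⟩
  simp only [mem_preimage, mem_singleton_iff, decide_eq_true_eq] at hm
  exact hm.symm

theorem exists_isEmbedding_nat_nat_real : ∃ e : (ℕ → ℕ) → ℝ, IsEmbedding e :=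
  ⟨_, IsEmbedding.subtypeVal.comp <| cantorSetHomeomorphNatToBool.symm.isEmbedding.comp <|
    cantorSpaceHomeomorphNatToCantorSpace.symm.isEmbedding.comp <|
    IsEmbedding.piMap fun _ => isEmbedding_decide_eq⟩

theorem List.getD_append_replicate_self {α : Type*} (s : List α) (d : α) (m n : ℕ) :
    (s ++ List.replicate m d).getD n d = s.getD n d := by
  rcases lt_or_ge n s.length with h | h
  · exact List.getD_append _ _ _ _ h
  · rw [List.getD_append_right _ _ _ _ h, List.getD_eq_default _ _ h]
    simp [List.getD_eq_getElem?_getD]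

theorem List.IsPrefix.getD_eq {α : Type*} {l L : List α} (h : l <+: L) (d : α) {n : ℕ}
    (hn : n < l.length) : L.getD n d = l.getD n d := by
  obtain ⟨t, rfl⟩ := h
  exact List.getD_append _ _ _ _ hn

namespace SparseCoding

def padZeros (f : ℕ → ℕ) (s : List ℕ) : List ℕ := s ++ List.replicate (f (encode s) + 1) 0

/-- Runs of zeros and spikes are values of `f` at codes of the list built so far, so a function
`f` dominating a fixed function of the code makes them as long, resp. as high, as required. -/
def blocks (f : ℕ → ℕ) : ℕ → List ℕ
  | 0 => []
  | k + 1 => padZeros f (blocks f k) ++ [f (encode (padZeros f (blocks f k))) + 1]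

def sparse (f : ℕ → ℕ) (n : ℕ) : ℕ := (blocks f (n + 1)).getD n 0

variable (f : ℕ → ℕ)

theorem length_padZeros (s : List ℕ) :
    (padZeros f s).length = s.length + (f (encode s) + 1) := by
  simp [padZeros]

theorem length_blocks_succ (k : ℕ) :
    (blocks f (k + 1)).length = (padZeros f (blocks f k)).length + 1 := by
  simp [blocks]

theorem padZeros_blocks_prefix (k : ℕ) : padZeros f (blocks f k) <+: blocks f (k + 1) :=
  List.prefix_append _ _

theorem blocks_prefix {k l : ℕ} (h : k ≤ l) : blocks f k <+: blocks f l := by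
  induction l, h using Nat.le_induction with
  | base => exact List.prefix_rfl
  | succ l _ ih => exact ih.trans ((List.prefix_append _ _).trans (padZeros_blocks_prefix f l))

theorem strictMono_length_blocks : StrictMono fun k => (blocks f k).length :=
  strictMono_nat_of_lt_succ fun k => by rw [length_blocks_succ, length_padZeros]; omega

theorem strictMono_length_padZeros_blocks :
    StrictMono fun k => (padZeros f (blocks f k)).length :=
  strictMono_nat_of_lt_succ fun k => by
    have := length_blocks_succ f k
    have := length_padZeros f (blocks f (k + 1))
    omega

theorem sparse_eq_getD {l : List ℕ} {k n : ℕ} (hl : l <+: blocks f k) (hn : n < l.length) :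
    sparse f n = l.getD n 0 := by
  rw [sparse, ← (blocks_prefix f (le_max_right k (n + 1))).getD_eq 0
    ((Nat.lt_succ_self n).trans_le (strictMono_length_blocks f).le_apply),
    (hl.trans (blocks_prefix f (le_max_left k (n + 1)))).getD_eq 0 hn]

theorem sparse_mem_cylinder (k : ℕ) :
    sparse f ∈ PiNat.cylinder (fun n => (blocks f k).getD n 0) (f (encode (blocks f k)) + 1) :=
  fun j hj => by
    rw [sparse_eq_getD f (padZeros_blocks_prefix f k) (by rw [length_padZeros]; omega), padZeros,
      List.getD_append_replicate_self]

theorem sparse_length_padZeros_blocks (k : ℕ) :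
    sparse f (padZeros f (blocks f k)).length = f (encode (padZeros f (blocks f k))) + 1 := by
  rw [sparse_eq_getD f (List.prefix_rfl (l := blocks f (k + 1)))
    (by rw [length_blocks_succ]; omega), blocks, List.getD_append_right _ _ _ _ le_rfl]
  simp

variable {f}

theorem exists_forall_not_sparse_eventuallyLE (g : ℕ → ℕ) :
    ∃ h : ℕ → ℕ, ∀ f, h ≤ᶠ[atTop] f → ¬ sparse f ≤ᶠ[atTop] g := by
  refine ⟨fun c => g (Denumerable.ofNat (List ℕ) c).length, fun f hf hle => ?_⟩
  have hcode : Tendsto (fun k => encode (padZeros f (blocks f k))) atTop atTop :=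
    Nat.cofinite_eq_atTop ▸ (encode_injective.comp
      (strictMono_length_padZeros_blocks f).injective.of_comp).tendsto_cofinite
  obtain ⟨k, hk, hkle⟩ := ((hcode.eventually hf).and
    ((strictMono_length_padZeros_blocks f).tendsto_atTop.eventually hle)).exists
  simp only [Denumerable.ofNat_encode, sparse_length_padZeros_blocks] at hk hkle
  omega

theorem exists_forall_sparse_mem {W : Set (ℕ → ℕ)} (hWo : IsOpen W)
    (hW : ∀ s : List ℕ, (fun n => s.getD n 0) ∈ W) :
    ∃ h : ℕ → ℕ, ∀ f, h ≤ᶠ[atTop] f → sparse f ∈ W := by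
  have hdepth : ∀ s : List ℕ, ∃ d, PiNat.cylinder (fun n => s.getD n 0) d ⊆ W := fun s => by
    obtain ⟨_, ⟨x, d, rfl⟩, hsx, hxW⟩ :=
      (PiNat.isTopologicalBasis_cylinders _).exists_subset_of_mem_open (hW s) hWo
    exact ⟨d, PiNat.mem_cylinder_iff_eq.1 hsx ▸ hxW⟩
  choose d hd using hdepth
  refine ⟨fun c => d (Denumerable.ofNat (List ℕ) c), fun f hf => ?_⟩
  have hcode : Tendsto (fun k => encode (blocks f k)) atTop atTop :=
    Nat.cofinite_eq_atTop ▸ (encode_injective.comp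
      (strictMono_length_blocks f).injective.of_comp).tendsto_cofinite
  obtain ⟨k, hk⟩ := (hcode.eventually hf).exists
  simp only [Denumerable.ofNat_encode] at hk
  exact hd _ (PiNat.cylinder_anti _ (by omega) (sparse_mem_cylinder f k))

end SparseCoding

open SparseCoding

theorem exists_scale
    (hb : ∀ T : Set (ℕ → ℕ), #T < dominatingNumber → ∃ g, ∀ f ∈ T, f ≤ᶠ[atTop] g) :
    ∃ (ι : Type) (G : ι → ℕ → ℕ), (∀ g, ∃ i, g ≤ᶠ[atTop] G i) ∧
      ∀ φ, #{i | ¬ φ ≤ᶠ[atTop] G i} < dominatingNumber := by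
  obtain ⟨D, hDcard, hD⟩ := exists_dominating_mk_eq_dominatingNumber
  let ι := dominatingNumber.ord.ToType
  obtain ⟨e⟩ : Nonempty (ι ≃ D) := Cardinal.eq.1 ((mk_ord_toType _).trans hDcard.symm)
  have hIio : ∀ i : ι, #(Iio i) < dominatingNumber := fun i =>
    (mk_Iio_lt i (by simp [ι])).trans_eq (mk_ord_toType _)
  -- `b i` bounds the members of `D` enumerated before `i`: there are fewer than `𝔡` of them.
  choose b hb using fun i : ι =>
    hb ((fun j => (e j : ℕ → ℕ)) '' Iio i) (mk_image_le.trans_lt (hIio i))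
  have hle : ∀ {i₀ i : ι}, i₀ ≤ i → (e i₀ : ℕ → ℕ) ≤ᶠ[atTop] e i ⊔ b i := fun {i₀ i} h => by
    rcases h.eq_or_lt with rfl | h
    · exact .of_forall fun n => le_sup_left
    · exact (hb i _ (mem_image_of_mem _ h)).trans (.of_forall fun n => le_sup_right)
  refine ⟨ι, fun i => e i ⊔ b i, fun g => ?_, fun φ => ?_⟩
  · obtain ⟨d, hd, hgd⟩ := hD g
    refine ⟨e.symm ⟨d, hd⟩, hgd.trans ?_⟩
    simpa using hle (le_refl (e.symm ⟨d, hd⟩))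
  · obtain ⟨d, hd, hφd⟩ := hD φ
    refine (mk_le_mk_of_subset fun i hi => ?_).trans_lt (hIio (e.symm ⟨d, hd⟩))
    by_contra hi₀
    exact hi (hφd.trans (by simpa using hle (not_lt.1 hi₀)))

theorem mengerProp_eventuallyZero_union_sparse {ι : Type} {G : ι → ℕ → ℕ}
    (hG : ∀ φ, #{i | ¬ φ ≤ᶠ[atTop] G i} < dominatingNumber) :
    MengerProp ↥(range (fun (s : List ℕ) (n : ℕ) => s.getD n 0) ∪ range (sparse ∘ G)) := by
  refine mengerProp_of_concentrated
    (fun c => ⟨fun n => (Denumerable.ofNat (List ℕ) c).getD n 0, .inl ⟨_, rfl⟩⟩)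
    fun V hV hqV => ?_
  obtain ⟨W, hWo, rfl⟩ := isOpen_induced_iff.1 hV
  have hW : ∀ s : List ℕ, (fun n => s.getD n 0) ∈ W := fun s => by
    simpa using hqV (mem_range_self (encode s))
  obtain ⟨h, hh⟩ := exists_forall_sparse_mem hWo hW
  refine (mk_le_mk_of_subset (t := range fun i : {i | ¬ h ≤ᶠ[atTop] G i} =>
    ⟨sparse (G i), .inr ⟨i, rfl⟩⟩) ?_).trans_lt (mk_range_le.trans_lt (hG h))
  rintro ⟨_, ⟨s, rfl⟩ | ⟨i, rfl⟩⟩ hx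
  · exact absurd (hW s) hx
  · exact ⟨⟨i, fun hi => hx (hh _ hi)⟩, rfl⟩

theorem exists_mengerProp_forall_exists_not_eventuallyLE :
    ∃ S : Set (ℕ → ℕ), MengerProp S ∧ ∀ g, ∃ f ∈ S, ¬ f ≤ᶠ[atTop] g := by
  by_cases hsmall : ∃ T : Set (ℕ → ℕ), #T < dominatingNumber ∧ ∀ g, ∃ f ∈ T, ¬ f ≤ᶠ[atTop] g
  · obtain ⟨T, hT, hunb⟩ := hsmall
    exact ⟨T, mengerProp_of_mk_lt_dominatingNumber hT, hunb⟩
  push Not at hsmall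
  obtain ⟨ι, G, hdom, hscale⟩ := exists_scale hsmall
  refine ⟨_, mengerProp_eventuallyZero_union_sparse hscale, fun g => ?_⟩
  obtain ⟨h, hh⟩ := exists_forall_not_sparse_eventuallyLE g
  obtain ⟨i, hi⟩ := hdom h
  exact ⟨sparse (G i), .inr ⟨i, rfl⟩, hh _ hi⟩

/-- there is (in ZFC) a set of reals which is Menger but not Hurewicz. -/
theorem exists_menger_not_hurewicz :
    ∃ X : Set ℝ, MengerProp ↥X ∧ ¬ HurewiczProp ↥X := by
  obtain ⟨S, hS, hunb⟩ := exists_mengerProp_forall_exists_not_eventuallyLE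
  obtain ⟨e, he⟩ := exists_isEmbedding_nat_nat_real
  let h := (he.comp (IsEmbedding.subtypeVal (p := (· ∈ S)))).toHomeomorph
  refine ⟨_, hS.of_surjective h.continuous h.surjective, fun hH => ?_⟩
  obtain ⟨g, hg⟩ := (hH.of_surjective h.symm.continuous h.symm.surjective)
    |>.exists_eventuallyLE_of_continuous continuous_subtype_val
  obtain ⟨f, hf, hfg⟩ := hunb g
  exact hfg (hg ⟨f, hf⟩)
end
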